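/- Let (X,f) be a topological dynamical system. Then every minimal quasi-section is contained in M_f, the closure of the union of all minimal sets. -/

import Mathlib

open Set

/-- The full orbit `{fⁿ(x) : n ∈ ℤ}` of a point under a homeomorphism. -/
def orbitZ {X : Type*} [TopologicalSpace X] (f : X ≃ₜ X) (x : X) : Set X :=
  {y | ∃ n : ℤ, (f.toEquiv ^ n) x = y}

/-- `O(A) = ⋃_{n ∈ ℤ} fⁿ(A)`. -/
def orbitSetZ {X : Type*} [TopologicalSpace X] (f : X ≃ₜ X) (A : Set X) : Set X :=
  ⋃ n : ℤ, (f.toEquiv ^ n) '' A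

/-- `O⁺(A) = ⋃_{n ≥ 0} fⁿ(A)`. -/
def orbitSetP {X : Type*} [TopologicalSpace X] (f : X ≃ₜ X) (A : Set X) : Set X :=
  ⋃ n : ℕ, (f.toEquiv ^ (n : ℤ)) '' A

/-- `O⁻(A) = ⋃_{n ≤ 0} fⁿ(A)`. -/
def orbitSetN {X : Type*} [TopologicalSpace X] (f : X ≃ₜ X) (A : Set X) : Set X :=
  ⋃ n : ℕ, (f.toEquiv ^ (-(n : ℤ))) '' A

/-- The ω-limit set of a point. -/
def omegaSet {X : Type*} [TopologicalSpace X] (f : X ≃ₜ X) (x : X) : Set X :=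
  ⋂ n : ℕ, closure {y | ∃ m : ℕ, n ≤ m ∧ (f.toEquiv ^ (m : ℤ)) x = y}

/-- The α-limit set of a point. -/
def alphaSet {X : Type*} [TopologicalSpace X] (f : X ≃ₜ X) (x : X) : Set X :=
  ⋂ n : ℕ, closure {y | ∃ m : ℕ, n ≤ m ∧ (f.toEquiv ^ (-(m : ℤ))) x = y}

/-- A minimal set: nonempty, closed, invariant, and every orbit in it is dense in it. -/
def IsMinimalSet {X : Type*} [TopologicalSpace X] (f : X ≃ₜ X) (M : Set X) : Prop :=
  M.Nonempty ∧ IsClosed M ∧ f '' M = M ∧ ∀ x ∈ M, M ⊆ closure (orbitZ f x)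

/-- `M_f`: the closure of the union of all minimal sets. -/
def minimalUnion {X : Type*} [TopologicalSpace X] (f : X ≃ₜ X) : Set X :=
  closure (⋃₀ {M | IsMinimalSet f M})

/-- A wandering point. -/
def IsWandering {X : Type*} [TopologicalSpace X] (f : X ≃ₜ X) (x : X) : Prop :=
  ∃ U : Set X, IsOpen U ∧ x ∈ U ∧ ∀ n : ℤ, n ≠ 0 → (f.toEquiv ^ n) '' U ∩ U = ∅

/-- `Ω_f`: the set of non-wandering points. -/
def nonWandering {X : Type*} [TopologicalSpace X] (f : X ≃ₜ X) : Set X :=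
  {x | ¬ IsWandering f x}

/-- A quasi-section: a closed set every open neighborhood of which has full orbit. -/
def IsQuasiSection {X : Type*} [TopologicalSpace X] (f : X ≃ₜ X) (A : Set X) : Prop :=
  IsClosed A ∧ ∀ U : Set X, IsOpen U → A ⊆ U → orbitSetZ f U = Set.univ

/-- A minimal quasi-section (minimal w.r.t. inclusion among quasi-sections). -/
def IsMinimalQuasiSection {X : Type*} [TopologicalSpace X] (f : X ≃ₜ X) (A : Set X) : Prop :=
  IsQuasiSection f A ∧ ∀ B : Set X, IsQuasiSection f B → B ⊆ A → B = A

/-- A basic set: a quasi-section meeting every orbit in at most one point. -/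
def IsBasicSet {X : Type*} [TopologicalSpace X] (f : X ≃ₜ X) (A : Set X) : Prop :=
  IsQuasiSection f A ∧ ∀ x : X, (orbitZ f x ∩ A).Subsingleton

/-- A minimal basic set (minimal w.r.t. inclusion among basic sets). -/
def IsMinimalBasicSet {X : Type*} [TopologicalSpace X] (f : X ≃ₜ X) (A : Set X) : Prop :=
  IsBasicSet f A ∧ ∀ B : Set X, IsBasicSet f B → B ⊆ A → B = A

/-- Densely aperiodic: the points with infinite orbit are dense. -/
def DenselyAperiodic {X : Type*} [TopologicalSpace X] (f : X ≃ₜ X) : Prop :=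
  Dense {x : X | (orbitZ f x).Infinite}

/-! Every orbit closure contains a minimal set, so an open set meeting every minimal set has full
orbit. If `A` is a quasi-section and `U ⊇ A ∩ M_f` is open, then `U ∪ M_fᶜ ⊇ A` has full orbit, so
every minimal set (being invariant and contained in `M_f`) meets `U`. Hence `A ∩ M_f` is again a
quasi-section, and minimality of `A` forces `A ⊆ M_f`. -/

section

variable {X : Type*} [TopologicalSpace X] {f : X ≃ₜ X}

open scoped Pointwise in
lemma zpow_apply_mem_of_image_eq {M : Set X} (hM : f '' M = M) (n : ℤ) {x : X} (hx : x ∈ M) :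
    (f.toEquiv ^ n) x ∈ M := by
  have hf : f.toEquiv ∈ MulAction.stabilizer (Equiv.Perm X) M := by
    rw [MulAction.mem_stabilizer_iff, ← Set.image_smul]
    exact hM
  have hfn := MulAction.mem_stabilizer_iff.mp (zpow_mem hf n)
  rw [← hfn]
  exact Set.smul_mem_smul_set hx

lemma mem_orbitSetZ {U : Set X} {y : X} : y ∈ orbitSetZ f U ↔ ∃ n : ℤ, (f.toEquiv ^ n) y ∈ U := by
  simp only [orbitSetZ, mem_iUnion, Equiv.image_eq_preimage_symm, mem_preimage,
    ← Equiv.Perm.inv_def, ← zpow_neg]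
  exact ⟨fun ⟨n, hn⟩ ↦ ⟨-n, hn⟩, fun ⟨n, hn⟩ ↦ ⟨-n, by rwa [neg_neg]⟩⟩

lemma mem_orbitZ_self (x : X) : x ∈ orbitZ f x := ⟨0, rfl⟩

lemma image_orbitZ (x : X) : f '' orbitZ f x = orbitZ f x := by
  ext z
  constructor
  · rintro ⟨w, ⟨n, rfl⟩, rfl⟩
    exact ⟨1 + n, by rw [zpow_add, zpow_one, Equiv.Perm.mul_apply]; rfl⟩
  · rintro ⟨n, rfl⟩
    refine ⟨(f.toEquiv ^ (-1 + n)) x, ⟨-1 + n, rfl⟩, ?_⟩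
    rw [zpow_add, Equiv.Perm.mul_apply, zpow_neg_one]
    exact f.toEquiv.apply_symm_apply _

lemma IsMinimalSet.subset_minimalUnion {M : Set X} (hM : IsMinimalSet f M) :
    M ⊆ minimalUnion f :=
  (subset_sUnion_of_mem hM).trans subset_closure

lemma inter_nonempty_of_orbitSetZ_eq_univ {M W : Set X} (hne : M.Nonempty) (hM : f '' M = M)
    (hW : orbitSetZ f W = univ) : (M ∩ W).Nonempty := by
  obtain ⟨m, hm⟩ := hne
  obtain ⟨n, hn⟩ := mem_orbitSetZ.mp (hW ▸ mem_univ m)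
  exact ⟨_, zpow_apply_mem_of_image_eq hM n hm, hn⟩

lemma exists_isMinimalSet_subset [CompactSpace X] {C : Set X} (hne : C.Nonempty)
    (hC : IsClosed C) (hinv : f '' C = C) : ∃ M ⊆ C, IsMinimalSet f M := by
  let S : Set (Set X) := {N | N ⊆ C ∧ N.Nonempty ∧ IsClosed N ∧ f '' N = N}
  have chain_bound : ∀ c ⊆ S, IsChain (· ⊆ ·) c → c.Nonempty → ∃ lb ∈ S, ∀ s ∈ c, lb ⊆ s := by
    rintro c hcS hchain ⟨N₀, hN₀⟩
    have : Nonempty c := ⟨⟨N₀, hN₀⟩⟩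
    refine ⟨⋂₀ c, ⟨(sInter_subset_of_mem hN₀).trans (hcS hN₀).1, ?_, ?_, ?_⟩,
      fun s hs ↦ sInter_subset_of_mem hs⟩
    · exact IsCompact.nonempty_sInter_of_directed_nonempty_isCompact_isClosed
        (hchain.symm.directedOn (r := fun a b : Set X ↦ a ⊇ b)) (fun N hN ↦ (hcS hN).2.1)
        (fun N hN ↦ (hcS hN).2.2.1.isCompact) (fun N hN ↦ (hcS hN).2.2.1)
    · exact isClosed_sInter fun N hN ↦ (hcS hN).2.2.1
    · rw [sInter_eq_biInter, image_iInter₂ f.bijective]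
      exact iInter₂_congr fun N hN ↦ (hcS hN).2.2.2
  obtain ⟨M, hMC, ⟨-, hMne, hMcl, hMinv⟩, hMmin⟩ :=
    zorn_superset_nonempty S chain_bound C ⟨Subset.rfl, hne, hC, hinv⟩
  refine ⟨M, hMC, hMne, hMcl, hMinv, fun x hx ↦ ?_⟩
  have horbit : closure (orbitZ f x) ⊆ M :=
    hMcl.closure_subset_iff.mpr <| by
      rintro _ ⟨n, rfl⟩
      exact zpow_apply_mem_of_image_eq hMinv n hx
  exact (hMmin ⟨horbit.trans hMC, ⟨x, subset_closure (mem_orbitZ_self x)⟩, isClosed_closure,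
    by rw [f.image_closure, image_orbitZ]⟩ horbit).ge

lemma orbitSetZ_eq_univ_of_forall_isMinimalSet [CompactSpace X] {U : Set X} (hU : IsOpen U)
    (hmeet : ∀ M, IsMinimalSet f M → (M ∩ U).Nonempty) : orbitSetZ f U = univ := by
  refine eq_univ_of_forall fun y ↦ ?_
  obtain ⟨M, hM, hMmin⟩ := exists_isMinimalSet_subset (f := f)
    ⟨y, subset_closure (mem_orbitZ_self y)⟩ isClosed_closure
    (by rw [f.image_closure, image_orbitZ])
  obtain ⟨m, hmM, hmU⟩ := hmeet M hMmin
  obtain ⟨_, hzU, n, rfl⟩ := mem_closure_iff.mp (hM hmM) U hU hmU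
  exact mem_orbitSetZ.mpr ⟨n, hzU⟩

lemma IsQuasiSection.inter_minimalUnion [CompactSpace X] {A : Set X} (hA : IsQuasiSection f A) :
    IsQuasiSection f (A ∩ minimalUnion f) := by
  refine ⟨hA.1.inter isClosed_closure, fun U hU hAU ↦ ?_⟩
  have hcover : orbitSetZ f (U ∪ (minimalUnion f)ᶜ) = univ :=
    hA.2 _ (hU.union isClosed_closure.isOpen_compl) fun a ha ↦
      (em (a ∈ minimalUnion f)).imp (fun h ↦ hAU ⟨ha, h⟩) id
  refine orbitSetZ_eq_univ_of_forall_isMinimalSet hU fun M hM ↦ ?_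
  obtain ⟨m, hmM, hmU | hmc⟩ := inter_nonempty_of_orbitSetZ_eq_univ hM.1 hM.2.2.1 hcover
  · exact ⟨m, hmM, hmU⟩
  · exact absurd (hM.subset_minimalUnion hmM) hmc

end

theorem stmt4_general {X : Type*} [TopologicalSpace X] [CompactSpace X] (f : X ≃ₜ X)
    (A : Set X) (hA : IsMinimalQuasiSection f A) :
    A ⊆ minimalUnion f := by
  have hAeq : A ∩ minimalUnion f = A := hA.2 _ hA.1.inter_minimalUnion inter_subset_left
  exact hAeq ▸ inter_subset_right

theorem stmt4 {X : Type*} [TopologicalSpace X] [CompactSpace X] [T2Space X] [Nonempty X] (f : X ≃ₜ X)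
    (A : Set X) (hA : IsMinimalQuasiSection f A) :
    A ⊆ minimalUnion f :=
  stmt4_general f A hA
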